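/- Rank deficiency bound for the extended SINR derivative matrix: Assume ω_k > 0 and S_k ≠ 0 for every k = 1,…,m_ue. Then rank(Y_bottom) ≥ m_ue − 1. -/

import Mathlib

open Matrix Finset

noncomputable def Gmat {mtx mue : ℕ} (H P : Matrix (Fin mtx) (Fin mue) ℂ) :
    Matrix (Fin mue) (Fin mue) ℂ := Hᴴ * P

noncomputable def Sval {mtx mue : ℕ} (H P : Matrix (Fin mtx) (Fin mue) ℂ) (k : Fin mue) : ℝ :=
  ‖Gmat H P k k‖ ^ 2

noncomputable def Ival {mtx mue : ℕ} (H P : Matrix (Fin mtx) (Fin mue) ℂ) (k : Fin mue) : ℝ :=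
  ∑ j ∈ Finset.univ.erase k, ‖Gmat H P k j‖ ^ 2

noncomputable def Wval {mtx mue : ℕ} (H P : Matrix (Fin mtx) (Fin mue) ℂ)
    (ω : Fin mue → ℝ) (k : Fin mue) : ℝ := Ival H P k + ω k ^ 2

noncomputable def Lval {mtx mue : ℕ} (H P : Matrix (Fin mtx) (Fin mue) ℂ) (k : Fin mue) : ℝ :=
  ∑ j ∈ Finset.univ.erase k, ‖Gmat H P j k‖ ^ 2

noncomputable def SINR {mtx mue : ℕ} (H P : Matrix (Fin mtx) (Fin mue) ℂ)
    (ω : Fin mue → ℝ) (k : Fin mue) : ℝ := Sval H P k / Wval H P ω k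

def PowerOK {mtx mue : ℕ} (β : Fin mtx → ℝ) (P : Matrix (Fin mtx) (Fin mue) ℂ) : Prop :=
  ∀ i, ∑ j, ‖P i j‖ ^ 2 ≤ β i

def ParetoOptimal {mtx mue : ℕ} (H : Matrix (Fin mtx) (Fin mue) ℂ) (ω : Fin mue → ℝ)
    (β : Fin mtx → ℝ) (P : Matrix (Fin mtx) (Fin mue) ℂ) : Prop :=
  PowerOK β P ∧ ¬ ∃ Q : Matrix (Fin mtx) (Fin mue) ℂ, PowerOK β Q ∧
    (∀ k, SINR H P ω k ≤ SINR H Q ω k) ∧ (∃ k, SINR H P ω k < SINR H Q ω k)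

/-- The matrix `F` with `F_{kk} = 1` and `F_{kj} = -S_k/W_k` for `j ≠ k`. -/
noncomputable def Fmat {mtx mue : ℕ} (H P : Matrix (Fin mtx) (Fin mue) ℂ) (ω : Fin mue → ℝ) :
    Matrix (Fin mue) (Fin mue) ℂ :=
  Matrix.of fun k j => if k = j then 1 else ((-(Sval H P k / Wval H P ω k) : ℝ) : ℂ)

/-- `D := 4 · diag(1/W_1,…,1/W_{m_ue}) · (G ∘ F)`. -/
noncomputable def Dmat {mtx mue : ℕ} (H P : Matrix (Fin mtx) (Fin mue) ℂ) (ω : Fin mue → ℝ) :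
    Matrix (Fin mue) (Fin mue) ℂ :=
  (4 : ℂ) • (Matrix.diagonal fun k => (((Wval H P ω k)⁻¹ : ℝ) : ℂ)) *
    Matrix.hadamard (Gmat H P) (Fmat H P ω)

/-- `Y_bottom := [Dᵀ | Pᵀe_2 | ⋯ | Pᵀe_{m_tx}]`: its first `m_ue` columns are the columns
of `Dᵀ` and the remaining `m_tx - 1` columns are the transposed rows `2,…,m_tx` of `P`. -/
noncomputable def Ybottom {mtx mue : ℕ} [NeZero mtx]
    (H P : Matrix (Fin mtx) (Fin mue) ℂ) (ω : Fin mue → ℝ) :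
    Matrix (Fin mue) (Fin mue ⊕ {i : Fin mtx // i ≠ 0}) ℂ :=
  Matrix.of fun k c => Sum.elim (fun j => Dmat H P ω j k) (fun i => P i.1 k) c

/-- **Rank deficiency bound for the extended SINR derivative matrix.** -/
theorem ybottom_rank_ge {mtx mue : ℕ} [NeZero mtx] (hmtx : 2 ≤ mtx)
    (H P : Matrix (Fin mtx) (Fin mue) ℂ) (ω : Fin mue → ℝ)
    (hω : ∀ k, 0 < ω k) (hS : ∀ k, Sval H P k ≠ 0) :
    mue - 1 ≤ (Ybottom H P ω).rank := by
  classical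
  have hI : ∀ k, 0 ≤ Ival H P k := fun k =>
    Finset.sum_nonneg fun j _ => sq_nonneg _
  have hW : ∀ k, 0 < Wval H P ω k := fun k =>
    add_pos_of_nonneg_of_pos (hI k) (pow_pos (hω k) 2)
  have hg : ∀ k, Gmat H P k k ≠ 0 := by
    intro k hk
    exact hS k (by simp [Sval, hk])
  set s : Fin mue → ℝ := fun k => Sval H P k / Wval H P ω k with hs_def
  have hs : ∀ k, 0 ≤ s k := fun k =>
    div_nonneg (sq_nonneg _) (hW k).le
  have h1s : ∀ k, (1 + (s k : ℂ)) ≠ 0 := by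
    intro k
    have : (0:ℝ) < 1 + s k := by linarith [hs k]
    exact_mod_cast (by push_cast; exact_mod_cast this.ne' : ((1 + s k : ℝ) : ℂ) ≠ 0)
  set v : Fin mue → ℂ :=
    fun k => (s k : ℂ) * (starRingEnd ℂ) (H 0 k) / ((1 + (s k : ℂ)) * Gmat H P k k) with hv_def
  set Y := Ybottom H P ω with hY
  have hker : LinearMap.ker (Yᵀ.mulVecLin) ≤ Submodule.span ℂ {v} := by
    intro x hx
    have hx0 : Yᵀ.mulVec x = 0 := hx
    have hxc : ∀ c, ∑ k, Y k c * x k = 0 := by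
      intro c
      have := congrFun hx0 c
      simpa [Matrix.mulVec, dotProduct, Matrix.transpose_apply] using this
    -- the P rows conditions
    have hPx : ∀ i : Fin mtx, i ≠ 0 → P.mulVec x i = 0 := by
      intro i hi
      have := hxc (Sum.inr ⟨i, hi⟩)
      simpa [hY, Ybottom, Matrix.mulVec, dotProduct] using this
    set c0 : ℂ := P.mulVec x 0 with hc0
    have hGx : ∀ k, (Gmat H P).mulVec x k = (starRingEnd ℂ) (H 0 k) * c0 := by
      intro k
      have : (Gmat H P).mulVec x = Hᴴ.mulVec (P.mulVec x) := by
        rw [Gmat, ← Matrix.mulVec_mulVec]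
      rw [this]
      have : Hᴴ.mulVec (P.mulVec x) k = ∑ i, (starRingEnd ℂ) (H i k) * P.mulVec x i := by
        simp [Matrix.mulVec, dotProduct, Matrix.conjTranspose_apply]
      rw [this]
      rw [Finset.sum_eq_single (0 : Fin mtx)]
      · intro i _ hi
        rw [hPx i hi, mul_zero]
      · intro h; exact absurd (Finset.mem_univ _) h
    -- the D rows conditions
    have hD : ∀ j k, Dmat H P ω j k
        = 4 * ((Wval H P ω j)⁻¹ : ℝ) * (Gmat H P j k * Fmat H P ω j k) := by
      intro j k
      simp [Dmat, Matrix.mul_apply, Matrix.diagonal, Matrix.hadamard,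
        Finset.mul_sum, Finset.sum_ite_eq, mul_assoc]
    have hrow : ∀ k, ∑ j, Gmat H P k j * Fmat H P ω k j * x j = 0 := by
      intro k
      have h := hxc (Sum.inl k)
      have h4 : (4 * (((Wval H P ω k)⁻¹ : ℝ) : ℂ)) ≠ 0 := by
        have := (hW k).ne'
        simp only [ne_eq, mul_eq_zero]
        push_neg
        refine ⟨by norm_num, ?_⟩
        simpa using (inv_ne_zero this)
      have : ∑ j, (4 * (((Wval H P ω k)⁻¹ : ℝ) : ℂ)) * (Gmat H P k j * Fmat H P ω k j * x j)
          = 0 := by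
        rw [← h]
        apply Finset.sum_congr rfl
        intro j _
        simp [hY, Ybottom, hD, mul_assoc]
      rw [← Finset.mul_sum] at this
      exact (mul_eq_zero.mp this).resolve_left h4
    have hxk : ∀ k, x k = c0 * v k := by
      intro k
      have h := hrow k
      rw [Finset.sum_eq_add_sum_sdiff_singleton_of_mem (Finset.mem_univ k)] at h
      have hFkk : Fmat H P ω k k = 1 := by simp [Fmat]
      have hFoff : ∀ j, j ≠ k → Fmat H P ω k j = -(s k : ℂ) := by
        intro j hj
        simp [Fmat, (Ne.symm hj : k ≠ j), hs_def]
      have hsum : ∑ j ∈ Finset.univ \ {k}, Gmat H P k j * Fmat H P ω k j * x j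
          = -(s k : ℂ) * ∑ j ∈ Finset.univ \ {k}, Gmat H P k j * x j := by
        rw [Finset.mul_sum]
        apply Finset.sum_congr rfl
        intro j hj
        have hjk : j ≠ k := by
          simpa [Finset.mem_sdiff] using hj
        rw [hFoff j hjk]; ring
      have hsum2 : ∑ j ∈ Finset.univ \ {k}, Gmat H P k j * x j
          = (Gmat H P).mulVec x k - Gmat H P k k * x k := by
        have : (Gmat H P).mulVec x k = ∑ j, Gmat H P k j * x j := by
          simp [Matrix.mulVec, dotProduct]
        rw [this, Finset.sum_eq_add_sum_sdiff_singleton_of_mem (Finset.mem_univ k)]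
        ring
      rw [hFkk, hsum, hsum2, hGx k] at h
      -- h : G k k * 1 * x k + -(s k) * (conj (H 0 k) * c0 - G k k * x k) = 0
      have key : (1 + (s k : ℂ)) * Gmat H P k k * x k
          = (s k : ℂ) * ((starRingEnd ℂ) (H 0 k) * c0) := by
        linear_combination h
      have hne : (1 + (s k : ℂ)) * Gmat H P k k ≠ 0 := mul_ne_zero (h1s k) (hg k)
      have hvk : c0 * v k
          = c0 * ((s k : ℂ) * (starRingEnd ℂ) (H 0 k)) / ((1 + (s k : ℂ)) * Gmat H P k k) := by
        simp only [hv_def]; ring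
      rw [hvk, eq_div_iff hne]
      linear_combination key
    have : x = c0 • v := by
      funext k
      simp [hxk k]
    rw [this]
    exact Submodule.smul_mem _ _ (Submodule.mem_span_singleton_self v)
  have hkerfr : Module.finrank ℂ (LinearMap.ker (Yᵀ.mulVecLin)) ≤ 1 := by
    calc Module.finrank ℂ (LinearMap.ker (Yᵀ.mulVecLin))
        ≤ Module.finrank ℂ (Submodule.span ℂ {v}) := Submodule.finrank_mono hker
      _ ≤ 1 := by
        refine (finrank_span_le_card ({v} : Set (Fin mue → ℂ))).trans ?_
        simp
  have hrn := LinearMap.finrank_range_add_finrank_ker (Yᵀ.mulVecLin)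
  rw [Module.finrank_fintype_fun_eq_card, Fintype.card_fin] at hrn
  have hrt : Y.rank = Yᵀ.rank := (Matrix.rank_transpose Y).symm
  have : Yᵀ.rank = Module.finrank ℂ (LinearMap.range (Yᵀ.mulVecLin)) := rfl
  rw [hrt, this]
  omega
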